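/- arXiv:1309.2043 — 2 statements merged into one kernel-verified Lean document; each statement's English description precedes it below -/
import Mathlib

section
/- Let X be a Banach space, k ∈ ℕ ∪ {∞}, r > 0, and suppose f : B(0,r) → X is C^k, where B(0,r) ⊂ ℝ^m. Let ξ : I → [0,1] be continuous on a compact interval I. Define F(μ)(t) := f(ξ(t)·μ) for μ ∈ B(0,r), t ∈ I. Then the map μ ↦ F(μ), from B(0,r) into the Banach space C(I, X) of continuous X-valued functions with the sup norm, is C^k. -/
/-!
Let `U` be open with `ξ t • U ⊆ U` for all `t` (for the ball: `0 ≤ ξ ≤ 1`). For `μ ∈ U` the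
points `ξ t • μ` form a compact set `K ⊆ U`, and near a compact set a `C¹` map is uniformly
differentiable: by the mean value inequality and the uniform continuity of `f'` near `K`,
`‖f (x + v) - f x - f' x v‖ ≤ ε ‖v‖` for all `x ∈ K` once `‖v‖` is small. Taking `v = ξ t • h`
shows that `μ ↦ (t ↦ f (ξ t • μ))` is differentiable into `C(T, X)` with derivative
`h ↦ (t ↦ ξ t • f' (ξ t • μ) h)`: a fixed continuous linear map applied to the same
construction for `f'`. Induction on the order of smoothness finishes the proof.
-/

open Metric Set Topology

universe u v

section

variable {T : Type*} {E : Type u} {F : Type v} [TopologicalSpace T]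
  [NormedAddCommGroup E] [NormedSpace ℝ E] [NormedAddCommGroup F]

open Classical in
/-- `t ↦ f (ξ t • μ)`, with the junk value `0` when this function is not continuous. -/
noncomputable def paramMap (ξ : C(T, ℝ)) (f : E → F) (μ : E) : C(T, F) :=
  if h : Continuous fun t => f (ξ t • μ) then ⟨_, h⟩ else 0

section paramMap

variable {ξ : C(T, ℝ)} {U : Set E} {μ : E}

theorem paramMap_apply (hξU : ∀ t, MapsTo (ξ t • ·) U U) {f : E → F} (hf : ContinuousOn f U)
    (hμ : μ ∈ U) (t : T) : paramMap ξ f μ t = f (ξ t • μ) := by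
  rw [paramMap, dif_pos (show Continuous fun t => f (ξ t • μ) from
    hf.comp_continuous (by fun_prop) fun t => hξU t hμ)]
  rfl

theorem continuousOn_paramMap (hξU : ∀ t, MapsTo (ξ t • ·) U U) {f : E → F}
    (hf : ContinuousOn f U) : ContinuousOn (paramMap ξ f) U := by
  refine ContinuousMap.continuousOn_of_continuousOn_uncurry _ ?_
  refine (hf.comp (by fun_prop) fun p hp => hξU p.2 hp.1).congr fun p hp => ?_
  exact paramMap_apply hξU hf hp.1 p.2

end paramMap

variable [NormedSpace ℝ F]

theorem IsCompact.exists_pos_forall_norm_sub_sub_fderiv_le {K U : Set E} (hK : IsCompact K)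
    (hU : IsOpen U) (hKU : K ⊆ U) {f : E → F} (hf : ContDiffOn ℝ 1 f U) {ε : ℝ} (hε : 0 < ε) :
    ∃ δ > 0, ∀ x ∈ K, ∀ v : E, ‖v‖ < δ → ‖f (x + v) - f x - fderiv ℝ f x v‖ ≤ ε * ‖v‖ := by
  obtain ⟨δ₁, hδ₁, hthick⟩ := hK.exists_thickening_subset_open hU hKU
  have hcont : ∀ x ∈ K, ContinuousAt (fderiv ℝ f) x := fun x hx =>
    (hf.continuousOn_fderiv_of_isOpen hU le_rfl).continuousAt (hU.mem_nhds (hKU hx))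
  obtain ⟨δ₂, hδ₂, hclose⟩ := Metric.mem_uniformity_dist.mp
    (hK.uniformContinuousAt_of_continuousAt _ hcont (dist_mem_uniformity hε))
  refine ⟨min δ₁ δ₂, lt_min hδ₁ hδ₂, fun x hx v hv => ?_⟩
  have hball : ball x (min δ₁ δ₂) ⊆ U := fun z hz =>
    hthick (mem_thickening_iff.mpr ⟨x, hx, (mem_ball.mp hz).trans_le (min_le_left _ _)⟩)
  have hderiv : ∀ z ∈ ball x (min δ₁ δ₂),
      HasFDerivWithinAt f (fderiv ℝ f z) (ball x (min δ₁ δ₂)) z :=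
    fun z hz => ((hf.differentiableOn one_ne_zero).differentiableAt
      (hU.mem_nhds (hball hz))).hasFDerivAt.hasFDerivWithinAt
  have hbound : ∀ z ∈ ball x (min δ₁ δ₂), ‖fderiv ℝ f z - fderiv ℝ f x‖ ≤ ε := fun z hz => by
    rw [← dist_eq_norm, dist_comm]
    exact (hclose ((mem_ball'.mp hz).trans_le (min_le_right _ _)) hx).le
  simpa using (convex_ball x _).norm_image_sub_le_of_norm_hasFDerivWithin_le' hderiv hbound
    (mem_ball_self (lt_min hδ₁ hδ₂)) (y := x + v) (mem_ball_iff_norm.mpr (by simpa using hv))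

variable [CompactSpace T]

noncomputable def ContinuousMap.weightedApplyCLM (ξ : C(T, ℝ)) :
    C(T, E →L[ℝ] F) →L[ℝ] E →L[ℝ] C(T, F) :=
  LinearMap.mkContinuous₂
    (LinearMap.mk₂ ℝ (fun (u : C(T, E →L[ℝ] F)) (h : E) =>
      (⟨fun t => ξ t • u t h, by fun_prop⟩ : C(T, F)))
      (fun _ _ _ => by ext; simp [smul_add])
      (fun _ _ _ => by ext; simpa using smul_comm _ _ _)
      (fun _ _ _ => by ext; simp [smul_add])
      (fun _ _ _ => by ext; simpa using smul_comm _ _ _))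
    ‖ξ‖ fun u h => by
      refine (ContinuousMap.norm_le _ (by positivity)).mpr fun t => ?_
      calc ‖ξ t • u t h‖ = ‖ξ t‖ * ‖u t h‖ := norm_smul _ _
        _ ≤ ‖ξ‖ * (‖u‖ * ‖h‖) := by
          gcongr
          · exact ξ.norm_coe_le_norm t
          · exact (u t).le_of_opNorm_le (u.norm_coe_le_norm t) h
        _ = ‖ξ‖ * ‖u‖ * ‖h‖ := (mul_assoc _ _ _).symm

@[simp]
theorem ContinuousMap.weightedApplyCLM_apply (ξ : C(T, ℝ)) (u : C(T, E →L[ℝ] F)) (h : E)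
    (t : T) :
    ξ.weightedApplyCLM u h t = ξ t • u t h :=
  rfl

section paramMap

variable {ξ : C(T, ℝ)} {U : Set E} {μ : E}

theorem hasFDerivAt_paramMap (hU : IsOpen U) (hξU : ∀ t, MapsTo (ξ t • ·) U U) {f : E → F}
    (hf : ContDiffOn ℝ 1 f U) (hμ : μ ∈ U) :
    HasFDerivAt (paramMap ξ f) (ξ.weightedApplyCLM (paramMap ξ (fderiv ℝ f) μ)) μ := by
  set C := ‖ξ‖ + 1
  have hC : 0 < C := by positivity
  have hξC : ∀ t (h : E), ‖ξ t • h‖ ≤ C * ‖h‖ := fun t h => by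
    rw [norm_smul]
    gcongr
    exact (ξ.norm_coe_le_norm t).trans (le_add_of_nonneg_right zero_le_one)
  have hK : range (fun t => ξ t • μ) ⊆ U := range_subset_iff.mpr fun t => hξU t hμ
  rw [hasFDerivAt_iff_isLittleO_nhds_zero, Asymptotics.isLittleO_iff]
  intro ε hε
  obtain ⟨δ, hδ, htaylor⟩ :=
    (isCompact_range (by fun_prop)).exists_pos_forall_norm_sub_sub_fderiv_le hU hK hf
      (div_pos hε hC)
  have hsmall : ∀ᶠ h in 𝓝 (0 : E), μ + h ∈ U ∧ ‖h‖ < δ / C := by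
    refine Filter.Eventually.and ?_ (eventually_norm_sub_lt 0 (div_pos hδ hC) |>.mono ?_)
    · exact (continuous_const_add μ).continuousAt.preimage_mem_nhds
        (by simpa using hU.mem_nhds hμ)
    · simp
  filter_upwards [hsmall] with h ⟨hμh, hh⟩
  refine (ContinuousMap.norm_le _ (by positivity)).mpr fun t => ?_
  have hvδ : ‖ξ t • h‖ < δ := (hξC t h).trans_lt (by rwa [lt_div_iff₀' hC] at hh)
  have hcont := hf.continuousOn
  have hcont' := hf.continuousOn_fderiv_of_isOpen hU le_rfl
  calc _ = ‖f (ξ t • μ + ξ t • h) - f (ξ t • μ) - fderiv ℝ f (ξ t • μ) (ξ t • h)‖ := by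
        simp [paramMap_apply hξU hcont hμh, paramMap_apply hξU hcont hμ,
          paramMap_apply hξU hcont' hμ, smul_add]
    _ ≤ ε / C * ‖ξ t • h‖ := htaylor _ (mem_range_self t) _ hvδ
    _ ≤ ε / C * (C * ‖h‖) := by gcongr; exact hξC t h
    _ = ε * ‖h‖ := by field_simp

-- `G` lives in `Type (max u v)` so that `E →L[ℝ] G`, the codomain of `fderiv`, does too.
theorem contDiffOn_paramMap_of_nat (hU : IsOpen U) (hξU : ∀ t, MapsTo (ξ t • ·) U U) (n : ℕ) :
    ∀ {G : Type max u v} [NormedAddCommGroup G] [NormedSpace ℝ G] {f : E → G},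
      ContDiffOn ℝ n f U → ContDiffOn ℝ n (paramMap ξ f) U := by
  induction n with
  | zero =>
    intro G _ _ f hf
    rw [Nat.cast_zero, contDiffOn_zero] at hf ⊢
    exact continuousOn_paramMap hξU hf
  | succ n ih =>
    intro G _ _ f hf
    have hderiv := fun μ (hμ : μ ∈ U) =>
      hasFDerivAt_paramMap hU hξU (hf.of_le (by exact_mod_cast Nat.le_add_left 1 n)) hμ
    rw [Nat.cast_succ, contDiffOn_succ_iff_fderiv_of_isOpen hU]
    refine ⟨fun μ hμ => (hderiv μ hμ).differentiableAt.differentiableWithinAt, by simp, ?_⟩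
    refine (ξ.weightedApplyCLM.contDiff.comp_contDiffOn
      (ih (hf.fderiv_of_isOpen hU (Nat.cast_succ n).ge))).congr fun μ hμ => ?_
    exact (hderiv μ hμ).fderiv

theorem contDiffOn_paramMap (hU : IsOpen U) (hξU : ∀ t, MapsTo (ξ t • ·) U U) {k : ℕ∞}
    {f : E → F} (hf : ContDiffOn ℝ k f U) : ContDiffOn ℝ k (paramMap ξ f) U := by
  let e : ULift.{u} F ≃L[ℝ] F := ContinuousLinearEquiv.ulift
  have hlift : ContDiffOn ℝ k (paramMap ξ (e.symm ∘ f)) U := by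
    rw [contDiffOn_iff_forall_nat_le] at hf ⊢
    exact fun n hn => contDiffOn_paramMap_of_nat hU hξU n
      (e.symm.contDiff.comp_contDiffOn (hf n hn))
  refine ((e : ULift.{u} F →L[ℝ] F).compLeftContinuous ℝ T).contDiff.comp_contDiffOn hlift
    |>.congr fun μ hμ => ?_
  ext t
  simp [paramMap_apply hξU hf.continuousOn hμ,
    paramMap_apply hξU (e.symm.continuous.comp_continuousOn hf.continuousOn) hμ]

end paramMap

end

theorem parameter_map_contDiff_into_continuousMaps_general
    (m : ℕ) (X : Type*) [NormedAddCommGroup X] [NormedSpace ℝ X]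
    (k : ℕ∞) (r : ℝ)
    (f : EuclideanSpace ℝ (Fin m) → X)
    (hf : ContDiffOn ℝ k f (ball (0 : EuclideanSpace ℝ (Fin m)) r))
    (a b : ℝ)
    (ξ : Set.Icc a b → ℝ) (hξ : Continuous ξ)
    (hξ_range : ∀ t, ξ t ∈ Icc (0 : ℝ) 1) :
    ∃ F : EuclideanSpace ℝ (Fin m) → C(Set.Icc a b, X),
      (∀ μ ∈ ball (0 : EuclideanSpace ℝ (Fin m)) r, ∀ t : Set.Icc a b,
        F μ t = f (ξ t • μ)) ∧
      ContDiffOn ℝ k F (ball (0 : EuclideanSpace ℝ (Fin m)) r) := by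
  let ξc : C(Set.Icc a b, ℝ) := ⟨ξ, hξ⟩
  have hξU : ∀ t, MapsTo (ξc t • ·) (ball (0 : EuclideanSpace ℝ (Fin m)) r) (ball 0 r) :=
    fun t _ hμ => (convex_ball 0 r).smul_mem_of_zero_mem (mem_ball_self (pos_of_mem_ball hμ)) hμ
      (hξ_range t)
  exact ⟨paramMap ξc f, fun μ hμ => paramMap_apply hξU hf.continuousOn hμ,
    contDiffOn_paramMap isOpen_ball hξU hf⟩

/-- if `f : B(0,r) → X` is `C^k` and `ξ : I → [0,1]` is continuous on a
compact interval, then `μ ↦ (t ↦ f(ξ(t)·μ))` is `C^k` from `B(0,r)` into `C(I,X)`. -/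
theorem parameter_map_contDiff_into_continuousMaps
    (m : ℕ) (X : Type*) [NormedAddCommGroup X] [NormedSpace ℝ X] [CompleteSpace X]
    (k : ℕ∞) (r : ℝ) (hr : 0 < r)
    (f : EuclideanSpace ℝ (Fin m) → X)
    (hf : ContDiffOn ℝ k f (ball (0 : EuclideanSpace ℝ (Fin m)) r))
    (a b : ℝ) (hab : a ≤ b)
    (ξ : Set.Icc a b → ℝ) (hξ : Continuous ξ)
    (hξ_range : ∀ t, ξ t ∈ Icc (0 : ℝ) 1) :
    ∃ F : EuclideanSpace ℝ (Fin m) → C(Set.Icc a b, X),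
      (∀ μ ∈ ball (0 : EuclideanSpace ℝ (Fin m)) r, ∀ t : Set.Icc a b,
        F μ t = f (ξ t • μ)) ∧
      ContDiffOn ℝ k F (ball (0 : EuclideanSpace ℝ (Fin m)) r) :=
  parameter_map_contDiff_into_continuousMaps_general m X k r f hf a b ξ hξ hξ_range
end

section
/- Let X be a Banach space, r > 0, and f : B(0,r) → X real analytic, in the sense that around every point f is given by a convergent power series in the coordinates of μ with coefficients multilinear maps into X. Let ξ : I → [0,1] be continuous on a compact interval I and set F(μ)(t) := f(ξ(t)μ). Then μ ↦ F(μ) is real analytic from B(0,r) into C(I,X). -/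
/-!
Around every point of the compact segment `{ξ t • μ₀}` the function `f` is the sum of a power
series, and re-expanding it at nearby points (`changeOrigin`) shows that the radius `ε` and the
coefficient bound `‖qₙ‖ εⁿ ≤ C` can be chosen uniformly along the segment. The Taylor
coefficients `(ξ t)ⁿ / n! • Dⁿf (ξ t • μ₀)` of `μ ↦ f (ξ t • μ)` at `μ₀` are then continuous in `t`
and bounded by `C / εⁿ`, so they form a power series with values in `C(I, X)` that converges in
sup norm near `μ₀`; its sum is `F` because that holds pointwise in `t`.
-/

open Metric Set

open scoped NNReal ENNReal Nat

namespace FormalMultilinearSeries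

variable {𝕜 E F : Type*} [NontriviallyNormedField 𝕜] [NormedAddCommGroup E] [NormedSpace 𝕜 E]
  [NormedAddCommGroup F] [NormedSpace 𝕜 F]

theorem exists_nnnorm_changeOrigin_mul_pow_le (p : FormalMultilinearSeries 𝕜 E F) {r r' : ℝ≥0}
    (h : (r + r' : ℝ≥0∞) < p.radius) :
    ∃ C : ℝ≥0, ∀ x : E, ‖x‖₊ ≤ r → ∀ k, ‖p.changeOrigin x k‖₊ * r' ^ k ≤ C := by
  have hr : (r : ℝ≥0∞) < p.radius := le_self_add.trans_lt h
  refine ⟨∑' k, ∑' s : Σ l : ℕ, { s : Finset (Fin (k + l)) // s.card = l },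
    ‖p (k + s.1)‖₊ * r ^ s.1 * r' ^ k, fun x hx k => ?_⟩
  have hx' : (‖x‖₊ : ℝ≥0∞) < p.radius := (ENNReal.coe_le_coe.2 hx).trans_lt hr
  calc ‖p.changeOrigin x k‖₊ * r' ^ k
      ≤ (∑' s : Σ l : ℕ, { s : Finset (Fin (k + l)) // s.card = l }, ‖p (k + s.1)‖₊ * r ^ s.1)
          * r' ^ k := by
        gcongr
        have hle : ∀ s : Σ l : ℕ, { s : Finset (Fin (k + l)) // s.card = l },
            ‖p (k + s.1)‖₊ * ‖x‖₊ ^ s.1 ≤ ‖p (k + s.1)‖₊ * r ^ s.1 := fun s => by gcongr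
        have hsum := p.changeOriginSeries_summable_aux₂ hr k
        exact (p.nnnorm_changeOrigin_le k hx').trans
          (Summable.tsum_le_tsum hle (NNReal.summable_of_le hle hsum) hsum)
    _ = ∑' s : Σ l : ℕ, { s : Finset (Fin (k + l)) // s.card = l },
          ‖p (k + s.1)‖₊ * r ^ s.1 * r' ^ k := (NNReal.tsum_mul_right _ _).symm
    _ ≤ _ := (NNReal.summable_sigma.1 (p.changeOriginSeries_summable_aux₁ h)).2.le_tsum' k

end FormalMultilinearSeries

section UniformPowerSeries

variable {𝕜 E F : Type*} [NontriviallyNormedField 𝕜] [NormedAddCommGroup E] [NormedSpace 𝕜 E]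
  [NormedAddCommGroup F] [NormedSpace 𝕜 F] {f : E → F}

theorem HasFPowerSeriesOnBall.norm_iteratedFDeriv_le [CompleteSpace F]
    {p : FormalMultilinearSeries 𝕜 E F} {x : E} {r : ℝ≥0∞} (hf : HasFPowerSeriesOnBall f p x r)
    (n : ℕ) : ‖iteratedFDeriv 𝕜 n f x‖ ≤ n ! * ‖p n‖ := by
  refine ContinuousMultilinearMap.opNorm_le_bound (by positivity) fun v => ?_
  rw [hf.iteratedFDeriv_eq_sum_of_completeSpace]
  calc ‖∑ σ : Equiv.Perm (Fin n), p n (fun i => v (σ i))‖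
      ≤ ∑ σ : Equiv.Perm (Fin n), ‖p n‖ * ∏ i, ‖v i‖ := by
        refine norm_sum_le_of_le _ fun σ _ => ?_
        rw [← Equiv.prod_comp σ (fun i => ‖v i‖)]
        exact (p n).le_opNorm _
    _ = n ! * ‖p n‖ * ∏ i, ‖v i‖ := by
        rw [Finset.sum_const, Finset.card_univ, Fintype.card_perm, Fintype.card_fin, nsmul_eq_mul,
          mul_assoc]

variable (𝕜) in
def HasUniformPowerSeriesOn (f : E → F) (S : Set E) (ε C : ℝ≥0) : Prop :=
  ∀ x ∈ S, ∃ q : FormalMultilinearSeries 𝕜 E F,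
    HasFPowerSeriesOnBall f q x ε ∧ ∀ n, ‖q n‖ * (ε : ℝ) ^ n ≤ C

theorem HasUniformPowerSeriesOn.mono {S S' : Set E} {ε ε' C C' : ℝ≥0}
    (h : HasUniformPowerSeriesOn 𝕜 f S ε C) (hS : S' ⊆ S) (hε' : 0 < ε') (hε : ε' ≤ ε)
    (hC : C ≤ C') : HasUniformPowerSeriesOn 𝕜 f S' ε' C' := by
  intro x hx
  obtain ⟨q, hq, hq_le⟩ := h x (hS hx)
  refine ⟨q, hq.mono (ENNReal.coe_pos.2 hε') (ENNReal.coe_le_coe.2 hε), fun n => ?_⟩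
  calc ‖q n‖ * (ε' : ℝ) ^ n ≤ ‖q n‖ * (ε : ℝ) ^ n := by gcongr
    _ ≤ C' := (hq_le n).trans (NNReal.coe_le_coe.2 hC)

variable [CompleteSpace F]

theorem HasFPowerSeriesOnBall.exists_hasUniformPowerSeriesOn_ball
    {p : FormalMultilinearSeries 𝕜 E F} {z : E} {R : ℝ≥0∞} (hf : HasFPowerSeriesOnBall f p z R) :
    ∃ ε : ℝ≥0, 0 < ε ∧ ∃ C : ℝ≥0, HasUniformPowerSeriesOn 𝕜 f (ball z ε) ε C := by
  obtain ⟨ρ, hρ0, hρR⟩ := ENNReal.lt_iff_exists_nnreal_btwn.1 hf.r_pos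
  have hε0 : 0 < ρ / 2 := half_pos (ENNReal.coe_pos.1 hρ0)
  have hε : ((ρ / 2 : ℝ≥0) : ℝ≥0∞) + (ρ / 2 : ℝ≥0) = ρ := by
    rw [← ENNReal.coe_add, add_halves]
  obtain ⟨C, hC⟩ := p.exists_nnnorm_changeOrigin_mul_pow_le ((hε.trans_lt hρR).trans_le hf.r_le)
  refine ⟨ρ / 2, hε0, C, fun x hx => ?_⟩
  have hy : ‖x - z‖₊ < ρ / 2 := by rwa [mem_ball_iff_norm, ← coe_nnnorm, NNReal.coe_lt_coe] at hx
  have hyρ : (‖x - z‖₊ : ℝ≥0∞) + (ρ / 2 : ℝ≥0) ≤ ρ := by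
    rw [← hε]; gcongr
  have hchange := hf.changeOrigin ((le_self_add.trans hyρ).trans_lt hρR)
  rw [add_sub_cancel] at hchange
  refine ⟨p.changeOrigin (x - z), hchange.mono (ENNReal.coe_pos.2 hε0)
    (ENNReal.le_sub_of_add_le_left ENNReal.coe_ne_top (hyρ.trans hρR.le)), fun n => ?_⟩
  exact_mod_cast hC _ hy.le n

theorem AnalyticOnNhd.exists_hasUniformPowerSeriesOn {s K : Set E} (hf : AnalyticOnNhd 𝕜 f s)
    (hK : IsCompact K) (hKs : K ⊆ s) :
    ∃ ε : ℝ≥0, 0 < ε ∧ ∃ C : ℝ≥0, HasUniformPowerSeriesOn 𝕜 f K ε C := by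
  refine hK.induction_on ⟨1, one_pos, 0, fun x hx => hx.elim⟩ ?_ ?_ fun z hz => ?_
  · rintro S T hST ⟨ε, hε, C, h⟩
    exact ⟨ε, hε, C, h.mono hST hε le_rfl le_rfl⟩
  · rintro S T ⟨ε, hε, C, h⟩ ⟨ε', hε', C', h'⟩
    have hmin : 0 < min ε ε' := lt_min hε hε'
    refine ⟨min ε ε', hmin, max C C', ?_⟩
    rintro x (hx | hx)
    · exact h.mono subset_rfl hmin (min_le_left _ _) (le_max_left _ _) x hx
    · exact h'.mono subset_rfl hmin (min_le_right _ _) (le_max_right _ _) x hx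
  · obtain ⟨p, R, hp⟩ := hf z (hKs hz)
    obtain ⟨ε, hε, C, h⟩ := hp.exists_hasUniformPowerSeriesOn_ball
    exact ⟨ball z ε, mem_nhdsWithin_of_mem_nhds (ball_mem_nhds z hε), ε, hε, C, h⟩

end UniformPowerSeries

namespace ContinuousMap

variable {𝕜 : Type*} [NontriviallyNormedField 𝕜] {S : Type*} [TopologicalSpace S] [CompactSpace S]
  {X : Type*} [NormedAddCommGroup X] [NormedSpace 𝕜 X]

section Multilinear

variable {ι : Type*} [Fintype ι] {E : ι → Type*} [∀ i, NormedAddCommGroup (E i)]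
  [∀ i, NormedSpace 𝕜 (E i)]

noncomputable def toContinuousMultilinearMap (c : C(S, ContinuousMultilinearMap 𝕜 E X)) :
    ContinuousMultilinearMap 𝕜 E C(S, X) :=
  MultilinearMap.mkContinuous
    { toFun := fun v => ⟨fun s => c s v, (continuous_eval_const v).comp c.continuous⟩
      map_update_add' := fun v i x y => by ext s; simp
      map_update_smul' := fun v i a x => by ext s; simp }
    ‖c‖ fun v => (ContinuousMap.norm_le _ (by positivity)).2 fun s =>
      ((c s).le_opNorm v).trans (by gcongr; exact c.norm_coe_le_norm s)

theorem norm_toContinuousMultilinearMap_le (c : C(S, ContinuousMultilinearMap 𝕜 E X)) :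
    ‖c.toContinuousMultilinearMap‖ ≤ ‖c‖ :=
  MultilinearMap.mkContinuous_norm_le _ (norm_nonneg c) _

end Multilinear

variable {E : Type*} [NormedAddCommGroup E] [NormedSpace 𝕜 E] [CompleteSpace X]

theorem hasFPowerSeriesOnBall_of_hasSum_apply {F : E → C(S, X)} {x : E}
    (c : ∀ n, C(S, E [×n]→L[𝕜] X)) {ρ : ℝ≥0} (hρ : 0 < ρ) {C : ℝ}
    (hc : ∀ n, ‖c n‖ * (ρ : ℝ) ^ n ≤ C)
    (hF : ∀ y ∈ eball (0 : E) ρ, ∀ s, HasSum (fun n => c n s fun _ => y) (F (x + y) s)) :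
    HasFPowerSeriesOnBall F (fun n => (c n).toContinuousMultilinearMap) x ρ := by
  set P : FormalMultilinearSeries 𝕜 E C(S, X) := fun n => (c n).toContinuousMultilinearMap
  have hP : (ρ : ℝ≥0∞) ≤ P.radius := P.le_radius_of_bound C fun n =>
    (mul_le_mul_of_nonneg_right (norm_toContinuousMultilinearMap_le _) (by positivity)).trans (hc n)
  refine ⟨hP, ENNReal.coe_pos.2 hρ, fun {y} hy => ?_⟩
  obtain ⟨g, hg⟩ := Summable.of_norm (P.summable_norm_apply (eball_subset_eball hP hy))
  convert hg using 1
  ext s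
  exact (hF y hy s).unique (ContinuousMap.hasSum_apply hg s)

end ContinuousMap

section ScaledFamily

variable {S E X : Type*} [TopologicalSpace S] [CompactSpace S] [NormedAddCommGroup E]
  [NormedSpace ℝ E] [NormedAddCommGroup X] [NormedSpace ℝ X] [CompleteSpace X]

theorem AnalyticOnNhd.analyticAt_continuousMap_smul {f : E → X} {s : Set E} (hs : IsOpen s)
    (hs_bal : Balanced ℝ s) (hf : AnalyticOnNhd ℝ f s) {ξ : S → ℝ} (hξ : Continuous ξ)
    (hξ1 : ∀ t, ‖ξ t‖ ≤ 1) {F : E → C(S, X)} (hF : ∀ μ ∈ s, ∀ t, F μ t = f (ξ t • μ))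
    {μ₀ : E} (hμ₀ : μ₀ ∈ s) : AnalyticAt ℝ F μ₀ := by
  have hpath : ∀ t, ξ t • μ₀ ∈ s := fun t => hs_bal.smul_mem (hξ1 t) hμ₀
  obtain ⟨ε, hε, C, hC⟩ := hf.exists_hasUniformPowerSeriesOn
    (isCompact_range (f := fun t => ξ t • μ₀) (hξ.smul continuous_const)) (range_subset_iff.2 hpath)
  obtain ⟨ρ, hρ, hρs⟩ := Metric.isOpen_iff.1 hs μ₀ hμ₀
  set δ : ℝ≥0 := min ε ρ.toNNReal
  have hδ : 0 < δ := lt_min hε (Real.toNNReal_pos.2 hρ)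
  have hδε : (δ : ℝ) ≤ ε := NNReal.coe_le_coe.2 (min_le_left _ _)
  have hδρ : (δ : ℝ) ≤ ρ := (Real.le_toNNReal_iff_coe_le hρ.le).1 (min_le_right _ _)
  -- Taylor coefficients of `μ ↦ f (ξ t • μ)` at `μ₀`: unlike the power series given by `hC`,
  -- they depend continuously on `t`.
  let c : ∀ n, C(S, E [×n]→L[ℝ] X) := fun n =>
    ⟨fun t => (ξ t ^ n / n !) • iteratedFDeriv ℝ n f (ξ t • μ₀),
      ((hξ.pow n).div_const _).smul
        ((hf.iteratedFDeriv n).continuousOn.comp_continuous (hξ.smul continuous_const) hpath)⟩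
  have hc : ∀ n, ‖c n‖ * (δ : ℝ) ^ n ≤ C := by
    intro n
    rw [← le_div_iff₀ (by positivity)]
    refine (ContinuousMap.norm_le _ (by positivity)).2 fun t => ?_
    rw [le_div_iff₀ (by positivity)]
    obtain ⟨q, hq, hq_le⟩ := hC _ (mem_range_self t)
    have hcoeff : ‖c n t‖ ≤ ‖q n‖ := calc
      ‖c n t‖ = ‖ξ t‖ ^ n / n ! * ‖iteratedFDeriv ℝ n f (ξ t • μ₀)‖ := by simp [c, norm_smul]
      _ ≤ 1 ^ n / n ! * (n ! * ‖q n‖) := by gcongr; exacts [hξ1 t, hq.norm_iteratedFDeriv_le n]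
      _ = ‖q n‖ := by rw [one_pow]; field_simp
    calc ‖c n t‖ * δ ^ n ≤ ‖q n‖ * ε ^ n := by gcongr
      _ ≤ C := hq_le n
  have hsum : ∀ y ∈ eball (0 : E) δ, ∀ t,
      HasSum (fun n => c n t fun _ => y) (F (μ₀ + y) t) := by
    intro y hy t
    rw [Metric.eball_coe, mem_ball_zero_iff] at hy
    obtain ⟨q, hq, -⟩ := hC _ (mem_range_self t)
    have hyε : ξ t • y ∈ eball (0 : E) ε := by
      rw [Metric.eball_coe]
      exact balanced_ball_zero.smul_mem (hξ1 t) (mem_ball_zero_iff.2 (hy.trans_le hδε))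
    have hμ : μ₀ + y ∈ s := hρs (by simpa using hy.trans_le hδρ)
    rw [hF _ hμ, smul_add]
    convert hq.hasSum_iteratedFDeriv hyε using 1
    ext n
    simp [c, ContinuousMultilinearMap.map_smul_univ, smul_smul, div_eq_inv_mul]
  exact ⟨_, _, ContinuousMap.hasFPowerSeriesOnBall_of_hasSum_apply c hδ hc hsum⟩

end ScaledFamily

theorem parameter_map_analytic_into_continuousMaps_general
    (m : ℕ) (X : Type*) [NormedAddCommGroup X] [NormedSpace ℝ X] [CompleteSpace X]
    (r : ℝ)
    (f : EuclideanSpace ℝ (Fin m) → X)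
    (hf : AnalyticOnNhd ℝ f (ball (0 : EuclideanSpace ℝ (Fin m)) r))
    (a b : ℝ)
    (ξ : Set.Icc a b → ℝ) (hξ : Continuous ξ)
    (hξ_range : ∀ t, ξ t ∈ Icc (0 : ℝ) 1) :
    ∃ F : EuclideanSpace ℝ (Fin m) → C(Set.Icc a b, X),
      (∀ μ ∈ ball (0 : EuclideanSpace ℝ (Fin m)) r, ∀ t : Set.Icc a b,
        F μ t = f (ξ t • μ)) ∧
      AnalyticOnNhd ℝ F (ball (0 : EuclideanSpace ℝ (Fin m)) r) := by
  classical
  have hξ1 : ∀ t, ‖ξ t‖ ≤ 1 := fun t => by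
    rw [Real.norm_eq_abs, abs_le]
    exact ⟨by linarith [(hξ_range t).1], (hξ_range t).2⟩
  have hpath : ∀ μ ∈ ball (0 : EuclideanSpace ℝ (Fin m)) r, ∀ t, ξ t • μ ∈ ball 0 r :=
    fun μ hμ t => balanced_ball_zero.smul_mem (hξ1 t) hμ
  let F : EuclideanSpace ℝ (Fin m) → C(Set.Icc a b, X) := fun μ =>
    if hμ : μ ∈ ball 0 r then
      ⟨fun t => f (ξ t • μ), hf.continuousOn.comp_continuous (hξ.smul continuous_const) (hpath μ hμ)⟩
    else 0
  have hF : ∀ μ ∈ ball (0 : EuclideanSpace ℝ (Fin m)) r, ∀ t, F μ t = f (ξ t • μ) :=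
    fun μ hμ t => by simp only [F, dif_pos hμ]; rfl
  exact ⟨F, hF, fun μ₀ hμ₀ => hf.analyticAt_continuousMap_smul isOpen_ball balanced_ball_zero hξ hξ1 hF hμ₀⟩

/-- if `f : B(0,r) → X` is real analytic and `ξ : I → [0,1]` is
continuous on a compact interval, then `μ ↦ (t ↦ f(ξ(t)·μ))` is real analytic from
`B(0,r)` into `C(I,X)`. -/
theorem parameter_map_analytic_into_continuousMaps
    (m : ℕ) (X : Type*) [NormedAddCommGroup X] [NormedSpace ℝ X] [CompleteSpace X]
    (r : ℝ) (hr : 0 < r)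
    (f : EuclideanSpace ℝ (Fin m) → X)
    (hf : AnalyticOnNhd ℝ f (ball (0 : EuclideanSpace ℝ (Fin m)) r))
    (a b : ℝ) (hab : a ≤ b)
    (ξ : Set.Icc a b → ℝ) (hξ : Continuous ξ)
    (hξ_range : ∀ t, ξ t ∈ Icc (0 : ℝ) 1) :
    ∃ F : EuclideanSpace ℝ (Fin m) → C(Set.Icc a b, X),
      (∀ μ ∈ ball (0 : EuclideanSpace ℝ (Fin m)) r, ∀ t : Set.Icc a b,
        F μ t = f (ξ t • μ)) ∧
      AnalyticOnNhd ℝ F (ball (0 : EuclideanSpace ℝ (Fin m)) r) :=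
  parameter_map_analytic_into_continuousMaps_general m X r f hf a b ξ hξ hξ_range
end
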